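/- Let α be a composition of n and T ∈ SYRT(α). Then T is a source tableau (of its ∼-equivalence class) if and only if for every entry i < n with i ∉ Des(T), the entry i+1 lies either in the same column as i, or in the column immediately to the left of the column containing i and in a strictly higher row than i. -/

import Mathlib

open Classical

namespace YRS

/-- `α` is a composition of `n`: a list of positive integers summing to `n`. -/
def IsComposition (n : ℕ) (α : List ℕ) : Prop :=
  (∀ a ∈ α, 0 < a) ∧ α.sum = n

/-- The cell `κ = (c, r)` (column `c`, row `r`, both 1-indexed, French notation)
belongs to the diagram `D(α)`. -/
def inDiagram (α : List ℕ) (κ : ℕ × ℕ) : Prop :=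
  1 ≤ κ.2 ∧ κ.2 ≤ α.length ∧ 1 ≤ κ.1 ∧ κ.1 ≤ α.getD (κ.2 - 1) 0

/-- `T` is a standard Young row-strict composition tableau of shape `α` (with entries
`1,…,n`), modelled as a total function on cells that vanishes off the diagram. -/
def IsSYRT (n : ℕ) (α : List ℕ) (T : ℕ × ℕ → ℕ) : Prop :=
  (∀ κ, ¬ inDiagram α κ → T κ = 0) ∧
  (∀ κ, inDiagram α κ → 1 ≤ T κ ∧ T κ ≤ n) ∧
  (∀ κ κ', inDiagram α κ → inDiagram α κ' → T κ = T κ' → κ = κ') ∧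
  (∀ v, 1 ≤ v → v ≤ n → ∃ κ, inDiagram α κ ∧ T κ = v) ∧
  (∀ c r, inDiagram α (c, r) → inDiagram α (c + 1, r) → T (c, r) < T (c + 1, r)) ∧
  (∀ r r', inDiagram α (1, r) → inDiagram α (1, r') → r < r' → T (1, r) < T (1, r')) ∧
  (∀ c r r', r' < r → inDiagram α (c, r) → inDiagram α (c + 1, r') →
      T (c, r) < T (c + 1, r') → inDiagram α (c + 1, r) ∧ T (c + 1, r) < T (c + 1, r'))

/-- The cell of `T` containing the entry `v` (junk value `(0,0)` if there is none). -/
noncomputable def cellOf (α : List ℕ) (T : ℕ × ℕ → ℕ) (v : ℕ) : ℕ × ℕ :=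
  if h : ∃ κ, inDiagram α κ ∧ T κ = v then h.choose else (0, 0)

/-- The filling obtained from `T` by exchanging the entries `i` and `i+1`. -/
def swapFun (i : ℕ) (T : ℕ × ℕ → ℕ) : ℕ × ℕ → ℕ := fun κ =>
  if T κ = i then i + 1 else if T κ = i + 1 then i else T κ

/-- The 0-Hecke operator `π_i` at the level of fillings:
`some T` if `i+1` is weakly left of `i`; `none` (i.e. `0`) if `i+1` is
right-adjacent to `i`; and `some (s_i T)` otherwise. -/
noncomputable def piFun (α : List ℕ) (i : ℕ) (T : ℕ × ℕ → ℕ) : Option (ℕ × ℕ → ℕ) :=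
  if (cellOf α T (i + 1)).1 ≤ (cellOf α T i).1 then some T
  else if cellOf α T (i + 1) = ((cellOf α T i).1 + 1, (cellOf α T i).2) then none
  else some (swapFun i T)

/-- The descent set of `T`: entries `i` (with `1 ≤ i ≤ n-1`) such that `i+1` lies in a
column strictly to the right of the column of `i`. -/
def DesSet (n : ℕ) (α : List ℕ) (T : ℕ × ℕ → ℕ) : Set ℕ :=
  {i | 1 ≤ i ∧ i < n ∧ (cellOf α T i).1 < (cellOf α T (i + 1)).1}

/-- `T ∼ T'`: in every column, the relative order (bottom to top) of the entries of `T`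
agrees with that of `T'`. -/
def simRel (α : List ℕ) (T T' : ℕ × ℕ → ℕ) : Prop :=
  ∀ c r r', inDiagram α (c, r) → inDiagram α (c, r') →
    (T (c, r) < T (c, r') ↔ T' (c, r) < T' (c, r'))

/-- Entries of `T` increase from bottom to top in every column (membership in `E_0`). -/
def colsIncreasing (α : List ℕ) (T : ℕ × ℕ → ℕ) : Prop :=
  ∀ c r r', inDiagram α (c, r) → inDiagram α (c, r') → r < r' → T (c, r) < T (c, r')

/-- `T` is a source tableau of its `∼`-equivalence class: no `T' ≠ T` in the class of `T`
satisfies `π_i(T') = T` for some `i`. -/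
def IsSource (n : ℕ) (α : List ℕ) (T : ℕ × ℕ → ℕ) : Prop :=
  ¬ ∃ T', IsSYRT n α T' ∧ simRel α T' T ∧ T' ≠ T ∧
      ∃ i, 1 ≤ i ∧ i < n ∧ piFun α i T' = some T

/-- One step of the `π`-operators: `π_i(T) = S` (as a tableau) for some `i`. -/
def piStep (n : ℕ) (α : List ℕ) (T S : ℕ × ℕ → ℕ) : Prop :=
  ∃ i, 1 ≤ i ∧ i < n ∧ piFun α i T = some S

/-- `T ⪯ S`: `S` is obtained from `T` by a (possibly empty) sequence of `π`-operators. -/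
def preceq (n : ℕ) (α : List ℕ) : (ℕ × ℕ → ℕ) → (ℕ × ℕ → ℕ) → Prop :=
  Relation.ReflTransGen (piStep n α)

/-- Removable cell of `D(α)`: rightmost cell of the top row, or the rightmost cell of a
row of length at least 2 such that no higher row has exactly one fewer cell. -/
def Removable (α : List ℕ) (κ : ℕ × ℕ) : Prop :=
  inDiagram α κ ∧ κ.1 = α.getD (κ.2 - 1) 0 ∧
    (κ.2 = α.length ∨
      (2 ≤ α.getD (κ.2 - 1) 0 ∧
        ∀ r, κ.2 < r → r ≤ α.length → α.getD (r - 1) 0 + 1 ≠ α.getD (κ.2 - 1) 0))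

/-- A removable cell of `D(α)` containing the largest entry of `T` in its column. -/
def DistRemovable (α : List ℕ) (T : ℕ × ℕ → ℕ) (κ : ℕ × ℕ) : Prop :=
  Removable α κ ∧ ∀ r, inDiagram α (κ.1, r) → r ≠ κ.2 → T (κ.1, r) < T κ

/-- Simple composition: whenever `α_j ≥ α_i ≥ 2` with `i < j`, some `α_k` with
`i ≤ k ≤ j` equals `α_i - 1`. -/
def SimpleComp (α : List ℕ) : Prop :=
  ∀ i j, 1 ≤ i → i < j → j ≤ α.length → 2 ≤ α.getD (i - 1) 0 →
    α.getD (i - 1) 0 ≤ α.getD (j - 1) 0 →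
    ∃ k, i ≤ k ∧ k ≤ j ∧ α.getD (k - 1) 0 + 1 = α.getD (i - 1) 0

/-- Decrease the `i`-th part (1-indexed) of `α` by one, deleting it if it becomes `0`. -/
def reduceAt (α : List ℕ) (i : ℕ) : List ℕ :=
  if α.getD (i - 1) 0 = 1 then α.eraseIdx (i - 1)
  else α.set (i - 1) (α.getD (i - 1) 0 - 1)

/-- The number of columns of `D(α)`. -/
def width (α : List ℕ) : ℕ := α.foldr max 0

/-- Boundary cell: a cell of the first column, or a cell with no cell of `D(α)` strictly
above it in its own column or the column immediately to the left. -/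
def Boundary (α : List ℕ) (κ : ℕ × ℕ) : Prop :=
  inDiagram α κ ∧ (κ.1 = 1 ∨
    ∀ r, κ.2 < r → ¬ inDiagram α (κ.1, r) ∧ ¬ inDiagram α (κ.1 - 1, r))

/-- The boundary cells listed in order: up the first column, then rightwards (for each
column `c ≥ 2` there is at most one boundary cell). -/
noncomputable def boundaryList (α : List ℕ) : List (ℕ × ℕ) :=
  ((List.range α.length).map fun r => ((1 : ℕ), r + 1)) ++
    ((List.range (width α)).filterMap fun c =>
      if h : ∃ r, Boundary α (c + 2, r) then some ((c + 2, h.choose) : ℕ × ℕ) else none)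

/-- The highest cell of `D(α)` strictly below `κ` in the column immediately to the right
of `κ` that is not yet threaded (i.e. not in `S`), if any. -/
noncomputable def nextCell (α : List ℕ) (S : Finset (ℕ × ℕ)) (κ : ℕ × ℕ) :
    Option (ℕ × ℕ) :=
  if h : ∃ r, r < κ.2 ∧ inDiagram α (κ.1 + 1, r) ∧ (κ.1 + 1, r) ∉ S ∧
      ∀ r', r < r' → r' < κ.2 → inDiagram α (κ.1 + 1, r') → (κ.1 + 1, r') ∈ S
  then some ((κ.1 + 1, h.choose) : ℕ × ℕ) else none

/-- The thread starting at `κ`, given the set `S` of already threaded cells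
(`fuel` bounds the length). -/
noncomputable def threadAux (α : List ℕ) (S : Finset (ℕ × ℕ)) :
    ℕ → (ℕ × ℕ) → List (ℕ × ℕ)
  | 0, κ => [κ]
  | fuel + 1, κ =>
      κ ::
        (match nextCell α S κ with
          | none => []
          | some κ' => threadAux α S fuel κ')

/-- The threads of the given boundary cells, constructed iteratively. -/
noncomputable def threadsAux (α : List ℕ) :
    List (ℕ × ℕ) → Finset (ℕ × ℕ) → List (List (ℕ × ℕ))
  | [], _ => []
  | κ :: rest, S =>
      threadAux α S (width α) κ ::
        threadsAux α rest (S ∪ (threadAux α S (width α) κ).toFinset)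

/-- The threads of `D(α)`, in order. -/
noncomputable def threads (α : List ℕ) : List (List (ℕ × ℕ)) :=
  threadsAux α (boundaryList α) ∅

/-- Fill the threads with consecutive integers, each thread from its rightmost cell (the
last cell of the list) to its leftmost cell (the boundary cell). -/
noncomputable def fillAux : List (List (ℕ × ℕ)) → ℕ → (ℕ × ℕ) → ℕ
  | [], _, _ => 0
  | L :: rest, off, κ =>
      if κ ∈ L then off + L.length - L.idxOf κ else fillAux rest (off + L.length) κ

/-- The tableau `T_sup`: the `k`-th thread is filled with the next `|L_k|` consecutive
integers, from right to left. -/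
noncomputable def TsupFun (α : List ℕ) : ℕ × ℕ → ℕ :=
  fun κ => fillAux (threads α) 0 κ

/-- The row-by-row "superstandard" filling: row `r` gets the entries
`α_1 + ⋯ + α_{r-1} + 1, …, α_1 + ⋯ + α_r` from left to right. -/
noncomputable def rowFill (α : List ℕ) : ℕ × ℕ → ℕ :=
  fun κ => if inDiagram α κ then (α.take (κ.2 - 1)).sum + κ.1 else 0

/-- The type of standard Young row-strict composition tableaux of shape `α`. -/
def SYRTof (n : ℕ) (α : List ℕ) : Type :=
  {T : ℕ × ℕ → ℕ // IsSYRT n α T}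

/-- `π_i` applied to a basis vector of the free `ℂ`-vector space on `SYRT(α)`. -/
noncomputable def piVec (n : ℕ) (α : List ℕ) (i : ℕ) (T : SYRTof n α) :
    SYRTof n α →₀ ℂ :=
  match piFun α i T.val with
  | none => 0
  | some T' =>
      if h : IsSYRT n α T' then Finsupp.single (⟨T', h⟩ : SYRTof n α) 1 else 0

/-- The `ℂ`-linear extension of `π_i` to the free `ℂ`-vector space on `SYRT(α)`. -/
noncomputable def piOp (n : ℕ) (α : List ℕ) (i : ℕ) :
    (SYRTof n α →₀ ℂ) →ₗ[ℂ] (SYRTof n α →₀ ℂ) :=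
  Finsupp.lift (SYRTof n α →₀ ℂ) ℂ (SYRTof n α) (piVec n α i)

/-- The span `R_α^{E_0}` of the tableaux whose columns increase from bottom to top. -/
noncomputable def E0span (n : ℕ) (α : List ℕ) : Submodule ℂ (SYRTof n α →₀ ℂ) :=
  Submodule.span ℂ
    ((fun T : SYRTof n α => Finsupp.single T (1 : ℂ)) '' {T | colsIncreasing α T.val})

/-- Apply the operators `π_i` for `i` in the list `l` from left to right
(`piSeq α [i₁, i₂, …] T = ⋯ (π_{i₂} (π_{i₁} T))`), with `none` meaning `0`. -/
noncomputable def piSeq (α : List ℕ) (l : List ℕ) (T : ℕ × ℕ → ℕ) :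
    Option (ℕ × ℕ → ℕ) :=
  l.foldl (fun o i => o.bind (piFun α i)) (some T)

/-! ### Auxiliary lemmas for Statement 6 -/

/-- The value-level transposition of `i` and `i+1`. -/
def sw (i x : ℕ) : ℕ := if x = i then i + 1 else if x = i + 1 then i else x

lemma swapFun_eq (i : ℕ) (T : ℕ × ℕ → ℕ) (κ : ℕ × ℕ) :
    swapFun i T κ = sw i (T κ) := rfl

lemma sw_sw (i x : ℕ) : sw i (sw i x) = x := by
  unfold sw; split_ifs <;> (first | exact (False.elim ‹False›) | omega)

lemma sw_lt {i a b : ℕ} (h : a < b) (hab : ¬(a = i ∧ b = i + 1)) :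
    sw i a < sw i b := by
  unfold sw; split_ifs <;> (first | exact (False.elim ‹False›) | omega)

lemma sw_lt_rev {i a b : ℕ} (h : sw i a < sw i b) :
    a < b ∨ (a = i + 1 ∧ b = i) := by
  revert h; unfold sw; split_ifs <;> (first | exact (False.elim ‹False›) | omega)

lemma cellOf_spec {α : List ℕ} {T : ℕ × ℕ → ℕ} {v : ℕ}
    (h : ∃ κ, inDiagram α κ ∧ T κ = v) :
    inDiagram α (cellOf α T v) ∧ T (cellOf α T v) = v := by
  rw [cellOf, dif_pos h]; exact h.choose_spec

lemma cellOf_eq {α : List ℕ} {T : ℕ × ℕ → ℕ}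
    (hinj : ∀ κ κ', inDiagram α κ → inDiagram α κ' → T κ = T κ' → κ = κ')
    {κ : ℕ × ℕ} {v : ℕ} (hκ : inDiagram α κ) (hv : T κ = v) : cellOf α T v = κ := by
  have h : ∃ κ, inDiagram α κ ∧ T κ = v := ⟨κ, hκ, hv⟩
  have hs := cellOf_spec h
  exact hinj _ _ hs.1 hκ (hs.2.trans hv.symm)

/-- The key construction: if `i+1` lies strictly left of `i` but not in the
configuration (adjacent column, strictly higher row), then swapping `i` and `i+1`
produces a witness that `T` is not a source tableau. -/
lemma swap_not_source {n : ℕ} {α : List ℕ} {T : ℕ × ℕ → ℕ} {i : ℕ}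
    (hT : IsSYRT n α T) (hi1 : 1 ≤ i) (hin : i < n)
    {A B : ℕ × ℕ} (hA : inDiagram α A) (hTA : T A = i)
    (hB : inDiagram α B) (hTB : T B = i + 1)
    (hcc : B.1 < A.1) (hnot : ¬(B.1 + 1 = A.1 ∧ A.2 < B.2)) :
    ¬ IsSource n α T := by
  obtain ⟨h0, hrg, hinj, hsurj, hR1, hR2, hR3⟩ := hT
  set T' := swapFun i T with hT'def
  -- value characterizations
  have hvi : ∀ κ, inDiagram α κ → T κ = i → κ = A := fun κ hκ h =>
    hinj κ A hκ hA (by rw [h, hTA])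
  have hvj : ∀ κ, inDiagram α κ → T κ = i + 1 → κ = B := fun κ hκ h =>
    hinj κ B hκ hB (by rw [h, hTB])
  have hT'A : T' A = i + 1 := by rw [hT'def, swapFun_eq, hTA]; unfold sw; simp
  have hT'B : T' B = i := by
    rw [hT'def, swapFun_eq, hTB]; unfold sw; split_ifs <;> (first | exact (False.elim ‹False›) | omega)
  -- if columns are adjacent, the row of B is below the row of A
  have hBrow : B.1 + 1 = A.1 → B.2 < A.2 := by
    intro hadj
    by_contra hge
    have hAB2 : A.2 = B.2 := by
      rcases Nat.lt_or_ge A.2 B.2 with h | h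
      · exact absurd ⟨hadj, h⟩ hnot
      · omega
    have hAeq : A = (B.1 + 1, B.2) := by
      apply Prod.ext <;> simp [hadj.symm, hAB2]
    have := hR1 B.1 B.2 (by simpa using hB) (by rw [← hAeq]; exact hA)
    rw [Prod.mk.eta, ← hAeq, hTA, hTB] at this
    omega
  -- monotonicity of the swap on the diagram
  have hmono : ∀ κ κ', inDiagram α κ → inDiagram α κ' → T κ < T κ' →
      ¬(κ = A ∧ κ' = B) → T' κ < T' κ' := by
    intro κ κ' hκ hκ' hlt hne
    rw [hT'def, swapFun_eq, swapFun_eq]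
    apply sw_lt hlt
    rintro ⟨e1, e2⟩
    exact hne ⟨hvi _ hκ e1, hvj _ hκ' e2⟩
  -- T' is an SYRT
  have hsyrt' : IsSYRT n α T' := by
    refine ⟨?_, ?_, ?_, ?_, ?_, ?_, ?_⟩
    · intro κ hκ
      rw [hT'def, swapFun_eq, h0 κ hκ]; unfold sw; split_ifs <;> (first | exact (False.elim ‹False›) | omega)
    · intro κ hκ
      have := hrg κ hκ
      rw [hT'def, swapFun_eq]; unfold sw; split_ifs <;> (first | exact (False.elim ‹False›) | omega)
    · intro κ κ' hκ hκ' h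
      apply hinj κ κ' hκ hκ'
      have : sw i (T' κ) = sw i (T' κ') := by rw [h]
      rwa [hT'def, swapFun_eq, swapFun_eq, sw_sw, sw_sw] at this
    · intro v hv1 hv2
      obtain ⟨κ, hκ, hκv⟩ := hsurj (sw i v)
        (by unfold sw; split_ifs <;> (first | exact (False.elim ‹False›) | omega)) (by unfold sw; split_ifs <;> (first | exact (False.elim ‹False›) | omega))
      exact ⟨κ, hκ, by rw [hT'def, swapFun_eq, hκv, sw_sw]⟩
    · intro c r h1 h2
      apply hmono _ _ h1 h2 (hR1 _ _ h1 h2)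
      rintro ⟨e1, e2⟩
      have f1 : A.1 = c := by rw [← e1]
      have f2 : B.1 = c + 1 := by rw [← e2]
      omega
    · intro r r' h1 h2 hrr
      apply hmono _ _ h1 h2 (hR2 _ _ h1 h2 hrr)
      rintro ⟨e1, e2⟩
      have f1 : A.1 = 1 := by rw [← e1]
      have f2 : B.1 = 1 := by rw [← e2]
      omega
    · intro c r r' hrr h1 h2 hlt
      rw [hT'def, swapFun_eq, swapFun_eq] at hlt
      rcases sw_lt_rev hlt with hlt0 | ⟨e1, e2⟩
      · obtain ⟨hd, hlt2⟩ := hR3 c r r' hrr h1 h2 hlt0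
        refine ⟨hd, ?_⟩
        rw [hT'def, swapFun_eq, swapFun_eq]
        -- extra facts for omega
        have hb1 : T (c + 1, r') = i + 1 → T (c + 1, r) < i := by
          intro hb
          have hBe := hvj _ h2 hb
          have hne : T (c + 1, r) ≠ i := by
            intro hx
            have hAe := hvi _ hd hx
            have f1 : A.1 = c + 1 := by rw [← hAe]
            have f2 : B.1 = c + 1 := by rw [← hBe]
            omega
          omega
        have hb2 : T (c + 1, r) = i → i + 1 < T (c + 1, r') := by
          intro hx
          have hAe := hvi _ hd hx
          have hne : T (c + 1, r') ≠ i + 1 := by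
            intro hb
            have hBe := hvj _ h2 hb
            have f1 : A.1 = c + 1 := by rw [← hAe]
            have f2 : B.1 = c + 1 := by rw [← hBe]
            omega
          omega
        unfold sw; split_ifs <;> (first | exact (False.elim ‹False›) | omega)
      · exfalso
        have hBe := hvj _ h1 e1
        have hAe := hvi _ h2 e2
        have f1 : A.1 = c + 1 := by rw [← hAe]
        have f2 : A.2 = r' := by rw [← hAe]
        have f3 : B.1 = c := by rw [← hBe]
        have f4 : B.2 = r := by rw [← hBe]
        exact hnot ⟨by omega, by omega⟩
  -- simRel T' T
  have hsim : simRel α T' T := by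
    intro c r r' h1 h2
    constructor
    · intro h
      rw [hT'def, swapFun_eq, swapFun_eq] at h
      rcases sw_lt_rev h with h' | ⟨e1, e2⟩
      · exact h'
      · exfalso
        have hBe := hvj _ h1 e1
        have hAe := hvi _ h2 e2
        have f1 : A.1 = c := by rw [← hAe]
        have f2 : B.1 = c := by rw [← hBe]
        omega
    · intro h
      apply hmono _ _ h1 h2 h
      rintro ⟨e1, e2⟩
      have f1 : A.1 = c := by rw [← e1]
      have f2 : B.1 = c := by rw [← e2]
      omega
  -- T' ≠ T
  have hne : T' ≠ T := by
    intro h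
    have := congrFun h A
    rw [hT'A, hTA] at this
    omega
  -- π_i(T') = some T
  have hinj' := hsyrt'.2.2.1
  have hc1 : cellOf α T' (i + 1) = A := cellOf_eq hinj' hA hT'A
  have hc2 : cellOf α T' i = B := cellOf_eq hinj' hB hT'B
  have hpi : piFun α i T' = some T := by
    rw [piFun, hc1, hc2, if_neg (by omega : ¬ A.1 ≤ B.1), if_neg ?_]
    · congr 1
      funext κ
      rw [hT'def, swapFun_eq, swapFun_eq, sw_sw]
    · intro h
      have f1 : A.1 = B.1 + 1 := by rw [h]
      have f2 : A.2 = B.2 := by rw [h]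
      have := hBrow f1.symm
      omega
  intro hsrc
  exact hsrc ⟨T', hsyrt', hsim, hne, i, hi1, hin, hpi⟩

end YRS
/-- `T ∈ SYRT(α)` is a source tableau of its `∼`-class iff for every
entry `i < n` with `i ∉ Des(T)`, the entry `i+1` is either in the same column as `i`, or
in the column immediately to the left of `i` and in a strictly higher row. -/
theorem stmt6 (n : ℕ) (α : List ℕ) (hα : YRS.IsComposition n α)
    (T : ℕ × ℕ → ℕ) (hT : YRS.IsSYRT n α T) :
    YRS.IsSource n α T ↔
      ∀ i, 1 ≤ i → i < n → i ∉ YRS.DesSet n α T →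
        ((YRS.cellOf α T (i + 1)).1 = (YRS.cellOf α T i).1 ∨
          ((YRS.cellOf α T (i + 1)).1 + 1 = (YRS.cellOf α T i).1 ∧
            (YRS.cellOf α T i).2 < (YRS.cellOf α T (i + 1)).2)) := by
  constructor
  · -- source → condition (contrapositive)
    intro hsrc i hi1 hin hdes
    by_contra hcon
    push_neg at hcon
    obtain ⟨hne, hnot⟩ := hcon
    have hiex : ∃ κ, YRS.inDiagram α κ ∧ T κ = i :=
      hT.2.2.2.1 i hi1 (le_of_lt hin)
    have hjex : ∃ κ, YRS.inDiagram α κ ∧ T κ = i + 1 :=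
      hT.2.2.2.1 (i + 1) (by omega) (by omega)
    have hAsp := YRS.cellOf_spec hiex
    have hBsp := YRS.cellOf_spec hjex
    have hdes' : ¬ (YRS.cellOf α T i).1 < (YRS.cellOf α T (i + 1)).1 := by
      intro h
      exact hdes ⟨hi1, hin, h⟩
    have hcc : (YRS.cellOf α T (i + 1)).1 < (YRS.cellOf α T i).1 := by omega
    exact YRS.swap_not_source hT hi1 hin hAsp.1 hAsp.2 hBsp.1 hBsp.2 hcc
      (fun h => absurd h.2 (by have := hnot h.1; omega)) hsrc
  · -- condition → source
    rintro hRHS ⟨T', hT'syrt, hsim, hne, i, hi1, hin, hpi⟩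
    rw [YRS.piFun] at hpi
    split_ifs at hpi with h1 h2
    · exact hne (Option.some.inj hpi)
    · have hTeq : YRS.swapFun i T' = T := Option.some.inj hpi
      push_neg at h1
      -- cells of i and i+1 in T'
      have hiex : ∃ κ, YRS.inDiagram α κ ∧ T' κ = i :=
        hT'syrt.2.2.2.1 i hi1 (le_of_lt hin)
      have hjex : ∃ κ, YRS.inDiagram α κ ∧ T' κ = i + 1 :=
        hT'syrt.2.2.2.1 (i + 1) (by omega) (by omega)
      have hAsp := YRS.cellOf_spec hiex
      have hBsp := YRS.cellOf_spec hjex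
      set A' := YRS.cellOf α T' i with hA'def
      set B' := YRS.cellOf α T' (i + 1) with hB'def
      -- T-values at A' and B'
      have hTA' : T A' = i + 1 := by
        rw [← hTeq, YRS.swapFun_eq, hAsp.2]; unfold YRS.sw; simp
      have hTB' : T B' = i := by
        rw [← hTeq, YRS.swapFun_eq, hBsp.2]; unfold YRS.sw; split_ifs <;> (first | exact (False.elim ‹False›) | omega)
      have hinjT := hT.2.2.1
      have hc1 : YRS.cellOf α T i = B' := YRS.cellOf_eq hinjT hBsp.1 hTB'
      have hc2 : YRS.cellOf α T (i + 1) = A' := YRS.cellOf_eq hinjT hAsp.1 hTA'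
      have hdes : i ∉ YRS.DesSet n α T := by
        intro hd
        rw [YRS.DesSet, Set.mem_setOf_eq, hc1, hc2] at hd
        omega
      rcases hRHS i hi1 hin hdes with heq | ⟨hadj, hrow⟩
      · rw [hc1, hc2] at heq; omega
      · rw [hc1, hc2] at hadj hrow
        -- hadj : A'.1 + 1 = B'.1, hrow : B'.2 < A'.2
        have hBeq : B' = (A'.1 + 1, B'.2) := by
          apply Prod.ext <;> simp [hadj.symm]
        have hR3' := hT'syrt.2.2.2.2.2.2 A'.1 A'.2 B'.2 hrow
          (by rw [Prod.mk.eta]; exact hAsp.1) (by rw [← hBeq]; exact hBsp.1)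
          (by rw [Prod.mk.eta, ← hBeq, hAsp.2, hBsp.2]; omega)
        obtain ⟨hd, hlt⟩ := hR3'
        -- x = T' (A'.1+1, A'.2) < i
        have hx1 : T' (A'.1 + 1, A'.2) ≠ i := by
          intro hx
          have he := hT'syrt.2.2.1 _ A' hd hAsp.1 (by rw [hx, hAsp.2])
          have h' : A'.1 + 1 = A'.1 := congrArg Prod.fst he
          omega
        have hlt' : T' (A'.1 + 1, A'.2) < i + 1 := by
          rwa [← hBeq, hBsp.2] at hlt
        have hxlti : T' (A'.1 + 1, A'.2) < i := by omega
        -- T-values and R1 of T give a contradiction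
        have hTx : T (A'.1 + 1, A'.2) = T' (A'.1 + 1, A'.2) := by
          rw [← hTeq, YRS.swapFun_eq]; unfold YRS.sw; split_ifs <;> (first | exact (False.elim ‹False›) | omega)
        have hR1 := hT.2.2.2.2.1 A'.1 A'.2
          (by exact hAsp.1) hd
        have e : T (A'.1, A'.2) = i + 1 := hTA'
        omega
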